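/- Let ρ, σ be positive definite operators on a finite-dimensional Hilbert space with ‖ρ‖_q = ‖σ‖_q ≠ 0 for some q ∈ [1,∞]. Then ρ ≤ exp(d_H(ρ,σ)) σ and σ ≤ exp(d_H(ρ,σ)) ρ, where d_H is the projective Hilbert metric. -/

import Mathlib

open scoped BigOperators ENNReal Kronecker ComplexOrder
open Matrix

noncomputable section

/-- The Schatten `p`-norm of a (possibly rectangular) complex matrix, defined via the
eigenvalues of `Xᴴ * X` (squares of the singular values); `p = ∞` gives the operator norm. -/
noncomputable def sNorm {a b : Type*} [Fintype a] [Fintype b] [DecidableEq b]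
    (p : ℝ≥0∞) (X : Matrix a b ℂ) : ℝ :=
  if p = ∞ then ⨆ i, Real.sqrt (((Matrix.posSemidef_conjTranspose_mul_self X).1).eigenvalues i)
  else (∑ i, (((Matrix.posSemidef_conjTranspose_mul_self X).1).eigenvalues i) ^ (p.toReal / 2)) ^
    (1 / p.toReal)

/-- Real power of a matrix via the functional calculus on Hermitian matrices
(junk value `0` on non-Hermitian input). -/
noncomputable def mpow {d : ℕ} (A : Matrix (Fin d) (Fin d) ℂ) (r : ℝ) :
    Matrix (Fin d) (Fin d) ℂ :=
  if hA : A.IsHermitian then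
    (hA.eigenvectorUnitary : Matrix (Fin d) (Fin d) ℂ) *
      Matrix.diagonal (fun i => ((hA.eigenvalues i ^ r : ℝ) : ℂ)) *
      star (hA.eigenvectorUnitary : Matrix (Fin d) (Fin d) ℂ)
  else 0

/-- The vector `ℓ_p` norm on `ℂ^n`, `p = ∞` giving the max norm. -/
noncomputable def lpNorm {n : ℕ} (p : ℝ≥0∞) (v : Fin n → ℂ) : ℝ :=
  if p = ∞ then ⨆ i, ‖v i‖
  else (∑ i, ‖v i‖ ^ p.toReal) ^ (1 / p.toReal)

/-- Mixed `ℓ_q → ℓ_p` norm of a matrix. -/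
noncomputable def matMixedNorm {m n : ℕ} (q p : ℝ≥0∞) (A : Matrix (Fin m) (Fin n) ℂ) : ℝ :=
  ⨆ v : Fin n → ℂ, lpNorm p (A.mulVec v) / lpNorm q v

/-- Mixed Schatten `q → p` norm of a linear map between matrix spaces. -/
noncomputable def mapMixedNorm {n m : ℕ} (q p : ℝ≥0∞)
    (Φ : Matrix (Fin n) (Fin n) ℂ →ₗ[ℂ] Matrix (Fin m) (Fin m) ℂ) : ℝ :=
  ⨆ X : Matrix (Fin n) (Fin n) ℂ, sNorm p (Φ X) / sNorm q X

/-- Mixed Schatten `q → p` norm restricted to positive semidefinite inputs. -/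
noncomputable def mapMixedNormPos {n m : ℕ} (q p : ℝ≥0∞)
    (Φ : Matrix (Fin n) (Fin n) ℂ →ₗ[ℂ] Matrix (Fin m) (Fin m) ℂ) : ℝ :=
  ⨆ X : {X : Matrix (Fin n) (Fin n) ℂ // X.PosSemidef}, sNorm p (Φ X.1) / sNorm q X.1

/-- The projective Hilbert metric between (positive definite) matrices. -/
noncomputable def dH {d : ℕ} (A B : Matrix (Fin d) (Fin d) ℂ) : ℝ :=
  Real.log (sNorm ∞ (mpow A (-(1/2)) * B * mpow A (-(1/2)))) +
    Real.log (sNorm ∞ (mpow B (-(1/2)) * A * mpow B (-(1/2))))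

/-- The Hilbert–Schmidt adjoint of a linear map between matrix spaces. -/
noncomputable def hsAdj {n m : ℕ}
    (Λ : Matrix (Fin n) (Fin n) ℂ →ₗ[ℂ] Matrix (Fin m) (Fin m) ℂ) :
    Matrix (Fin m) (Fin m) ℂ →ₗ[ℂ] Matrix (Fin n) (Fin n) ℂ where
  toFun H := Matrix.of fun i j => ((Λ (Matrix.single i j 1))ᴴ * H).trace
  map_add' x y := by
    ext i j
    simp [Matrix.mul_add, Matrix.trace_add]
  map_smul' c x := by
    ext i j
    simp [Matrix.mul_smul, Matrix.trace_smul]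

/-- Application of `id_k ⊗ Φ` to a matrix on `ℂ^k ⊗ ℂ^n`, acting blockwise. -/
def blockMap {n m : ℕ} (Φ : Matrix (Fin n) (Fin n) ℂ →ₗ[ℂ] Matrix (Fin m) (Fin m) ℂ) (k : ℕ)
    (M : Matrix (Fin k × Fin n) (Fin k × Fin n) ℂ) : Matrix (Fin k × Fin m) (Fin k × Fin m) ℂ :=
  Matrix.of fun x y => Φ (Matrix.of fun i j => M (x.1, i) (y.1, j)) x.2 y.2

/-- Complete positivity of a linear map between matrix spaces. -/
def IsCP {n m : ℕ} (Φ : Matrix (Fin n) (Fin n) ℂ →ₗ[ℂ] Matrix (Fin m) (Fin m) ℂ) : Prop :=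
  ∀ (k : ℕ) (M : Matrix (Fin k × Fin n) (Fin k × Fin n) ℂ),
    M.PosSemidef → (blockMap Φ k M).PosSemidef

/-- Partial trace over the second tensor factor. -/
def traceRight {a b : ℕ} (ρ : Matrix (Fin a × Fin b) (Fin a × Fin b) ℂ) :
    Matrix (Fin a) (Fin a) ℂ :=
  Matrix.of fun i j => ∑ k, ρ (i, k) (j, k)

/-- Partial trace over the first tensor factor. -/
def traceLeft {a b : ℕ} (ρ : Matrix (Fin a × Fin b) (Fin a × Fin b) ℂ) :
    Matrix (Fin b) (Fin b) ℂ :=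
  Matrix.of fun i j => ∑ k, ρ (k, i) (k, j)

/-- One step of the (quantum) Boyd iteration: `S(ω) = (Λ*( (Λ ω)^(p-1) ))^e`
where `e` plays the role of `1/(q-1)`. -/
noncomputable def boydS {d : ℕ} (Λ : Matrix (Fin d) (Fin d) ℂ →ₗ[ℂ] Matrix (Fin d) (Fin d) ℂ)
    (p e : ℝ) (ω : Matrix (Fin d) (Fin d) ℂ) : Matrix (Fin d) (Fin d) ℂ :=
  mpow (hsAdj Λ (mpow (Λ ω) (p - 1))) e

/-!
Put `λ = ‖σ^{-1/2} ρ σ^{-1/2}‖_∞` and `μ = ‖ρ^{-1/2} σ ρ^{-1/2}‖_∞`, so that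
`exp (dH ρ σ) = μ λ`, `ρ ≤ λ σ` and `σ ≤ μ ρ`. Schatten norms are monotone for the Loewner order,
hence `‖ρ‖_q ≤ λ ‖σ‖_q = λ ‖ρ‖_q` forces `1 ≤ λ`, and likewise `1 ≤ μ`; so `λ, μ ≤ μ λ`.

For finite `q = p`, monotonicity of `∑ᵢ λᵢ(A)^p` comes from the trace Young inequality
`tr (A^{p-1} B) ≤ (1 - 1/p) tr A^p + (1/p) tr B^p`: in eigenbases `(uᵢ)` of `A` and `(vⱼ)` of `B`
the left side is `∑ᵢⱼ aᵢ^{p-1} bⱼ |⟨uᵢ, vⱼ⟩|²`, whose weights are doubly stochastic, so scalar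
Young applies termwise. Together with `tr A^p = tr (A^{p-1} A) ≤ tr (A^{p-1} B)` this gives
`tr A^p ≤ tr B^p`.
-/
open scoped MatrixOrder
open Finset

section
variable {ι α : Type*} [Fintype ι]

theorem Fintype.sum_comp_eq_of_map_univ_eq {M : Type*} [AddCommMonoid M] {f g : ι → α}
    (h : univ.val.map f = univ.val.map g) (φ : α → M) : ∑ i, φ (f i) = ∑ i, φ (g i) := by
  have := congrArg (fun s => (s.map φ).sum) h
  simp only [Multiset.map_map] at this
  exact this

theorem Fintype.iSup_comp_eq_of_map_univ_eq {β : Type*} [SupSet β] {f g : ι → α}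
    (h : univ.val.map f = univ.val.map g) (φ : α → β) : ⨆ i, φ (f i) = ⨆ i, φ (g i) := by
  have hrange : Set.range f = Set.range g := by
    ext x
    simpa using congrArg (x ∈ ·) h
  change sSup (Set.range (φ ∘ f)) = sSup (Set.range (φ ∘ g))
  rw [Set.range_comp, Set.range_comp, hrange]

end

theorem Real.rpow_sub_one_mul_le {a b p : ℝ} (ha : 0 ≤ a) (hb : 0 ≤ b) (hp : 1 ≤ p) :
    a ^ (p - 1) * b ≤ (1 - 1 / p) * a ^ p + 1 / p * b ^ p := by
  have hp0 : 0 < p := zero_lt_one.trans_le hp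
  have h := Real.geom_mean_le_arith_mean2_weighted (sub_nonneg.2 (div_le_one_of_le₀ hp hp0.le))
    (one_div_pos.2 hp0).le (Real.rpow_nonneg ha p) (Real.rpow_nonneg hb p) (sub_add_cancel 1 _)
  rwa [← Real.rpow_mul ha, ← Real.rpow_mul hb, mul_one_sub, mul_one_div_cancel hp0.ne',
    Real.rpow_one] at h

namespace Matrix

theorem PosSemidef.smul_sub_mono {n : Type*} {A B : Matrix n n ℂ} {a b : ℝ}
    (h : ((a : ℂ) • B - A).PosSemidef) (hB : B.PosSemidef) (hab : a ≤ b) :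
    ((b : ℂ) • B - A).PosSemidef := by
  have hba : ((b : ℂ) • B - A) = ((a : ℂ) • B - A) + ((b - a : ℝ) : ℂ) • B := by
    push_cast; module
  rw [hba]
  exact h.add (hB.smul (by exact_mod_cast sub_nonneg.2 hab))

variable {n : Type*} [Fintype n] [DecidableEq n]

theorem sum_normSq_apply_of_mem_unitaryGroup {W : Matrix n n ℂ} (hW : W ∈ unitaryGroup n ℂ)
    (i : n) : ∑ j, Complex.normSq (W i j) = 1 := by
  have h := congrFun (congrFun (mem_unitaryGroup_iff.mp hW) i) i
  simp only [mul_apply, star_apply, one_apply_eq, Complex.star_def, Complex.mul_conj] at h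
  exact_mod_cast h

theorem sum_normSq_apply_of_mem_unitaryGroup' {W : Matrix n n ℂ} (hW : W ∈ unitaryGroup n ℂ)
    (j : n) : ∑ i, Complex.normSq (W i j) = 1 := by
  simpa using sum_normSq_apply_of_mem_unitaryGroup (Unitary.star_mem hW) j

theorem trace_unitary_conj_diagonal_mul (U V : Matrix n n ℂ) (f g : n → ℝ) :
    ((U * diagonal (fun i => (f i : ℂ)) * star U) *
        (V * diagonal (fun j => (g j : ℂ)) * star V)).trace =
      ∑ i, ∑ j, ((f i * g j * Complex.normSq ((star U * V) i j) : ℝ) : ℂ) := by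
  set W := star U * V
  calc _ = (diagonal (fun i => (f i : ℂ)) * W * diagonal (fun j => (g j : ℂ)) * star W).trace := by
        simp only [W, star_mul, star_star, Matrix.mul_assoc]
        rw [Matrix.trace_mul_comm U]
        simp only [Matrix.mul_assoc]
    _ = _ := by
        refine Finset.sum_congr rfl fun i _ => ?_
        rw [diag_apply, mul_apply]
        push_cast
        refine Finset.sum_congr rfl fun j _ => ?_
        rw [mul_diagonal, diagonal_mul, star_apply, Complex.star_def,
          Complex.normSq_eq_conj_mul_self]
        ring

theorem PosSemidef.trace_mul_nonneg {P X : Matrix n n ℂ} (hP : P.PosSemidef)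
    (hX : X.PosSemidef) : 0 ≤ (P * X).trace := by
  obtain ⟨S, rfl⟩ := CStarAlgebra.nonneg_iff_eq_star_mul_self.mp hP.nonneg
  rw [Matrix.mul_assoc, trace_mul_comm, star_eq_conjTranspose]
  exact (hX.mul_mul_conjTranspose_same S).trace_nonneg

theorem IsHermitian.posSemidef_smul_one_sub_iff {A : Matrix n n ℂ} (hA : A.IsHermitian)
    {c : ℝ} : ((c : ℂ) • 1 - A).PosSemidef ↔ ∀ i, hA.eigenvalues i ≤ c := by
  have hc : algebraMap ℝ (Matrix n n ℂ) c = (c : ℂ) • 1 := by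
    rw [Algebra.algebraMap_eq_smul_one, RCLike.real_smul_eq_coe_smul (K := ℂ)]
    rfl
  rw [← hc, ← le_iff, le_algebraMap_iff_spectrum_le hA.isSelfAdjoint,
    hA.spectrum_real_eq_range_eigenvalues, Set.forall_mem_range]

open Polynomial in
theorem IsHermitian.map_eigenvalues_eq_of_eq_unitary_conj {A U : Matrix n n ℂ}
    (hA : A.IsHermitian) (hU : U ∈ unitaryGroup n ℂ) {v : n → ℝ}
    (h : A = U * diagonal (fun i => (v i : ℂ)) * star U) :
    univ.val.map hA.eigenvalues = univ.val.map v := by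
  have hchar : A.charpoly = ((univ.val.map fun i => (v i : ℂ)).map fun z => X - C z).prod := by
    rw [h, charpoly_mul_comm, ← Matrix.mul_assoc, mem_unitaryGroup_iff'.mp hU, Matrix.one_mul,
      charpoly_diagonal, Multiset.map_map]
    rfl
  have hroots := hA.roots_charpoly_eq_eigenvalues
  rw [hchar, roots_multiset_prod_X_sub_C] at hroots
  refine Multiset.map_injective Complex.ofReal_injective ?_
  simp only [Multiset.map_map] at hroots ⊢
  exact hroots.symm

theorem PosSemidef.map_eigenvalues_conjTranspose_mul_self {B : Matrix n n ℂ}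
    (hB : B.PosSemidef) :
    univ.val.map (posSemidef_conjTranspose_mul_self B).1.eigenvalues =
      univ.val.map fun i => hB.1.eigenvalues i ^ 2 := by
  refine IsHermitian.map_eigenvalues_eq_of_eq_unitary_conj _ hB.1.eigenvectorUnitary.2 ?_
  have hU := mem_unitaryGroup_iff'.mp hB.1.eigenvectorUnitary.2
  rw [hB.1.eq]
  conv_lhs => rw [hB.1.spectral_theorem, Unitary.conjStarAlgAut_apply]
  simp only [Matrix.mul_assoc]
  rw [← Matrix.mul_assoc (star _) _ (diagonal _ * _), hU, Matrix.one_mul,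
    ← Matrix.mul_assoc (diagonal _), diagonal_mul_diagonal]
  congr 3 with i
  simp [sq]

end Matrix

section SchattenNorm

variable {n : Type*} [Fintype n] [DecidableEq n]

theorem sNorm_nonneg {a b : Type*} [Fintype a] [Fintype b] [DecidableEq b] (p : ℝ≥0∞)
    (X : Matrix a b ℂ) : 0 ≤ sNorm p X := by
  unfold sNorm
  split_ifs
  · exact Real.iSup_nonneg fun i => Real.sqrt_nonneg _
  · exact Real.rpow_nonneg (Finset.sum_nonneg fun i _ => Real.rpow_nonneg
      ((Matrix.posSemidef_conjTranspose_mul_self X).eigenvalues_nonneg i) _) _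

theorem sNorm_smul {m : Type*} [Fintype m] (c : ℝ) {p : ℝ≥0∞} (hp : p ≠ 0)
    (X : Matrix m n ℂ) : sNorm p ((c : ℂ) • X) = |c| * sNorm p X := by
  have hXX := Matrix.posSemidef_conjTranspose_mul_self X
  have hX := hXX.1
  have hmap :
      univ.val.map (Matrix.posSemidef_conjTranspose_mul_self ((c : ℂ) • X)).1.eigenvalues =
        univ.val.map fun i => c ^ 2 * hX.eigenvalues i := by
    refine Matrix.IsHermitian.map_eigenvalues_eq_of_eq_unitary_conj _ hX.eigenvectorUnitary.2 ?_
    rw [Matrix.conjTranspose_smul, Matrix.smul_mul, Matrix.mul_smul, smul_smul]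
    conv_lhs => rw [hX.spectral_theorem, Unitary.conjStarAlgAut_apply]
    rw [← Matrix.smul_mul, ← Matrix.mul_smul, ← Matrix.diagonal_smul]
    congr 3 with i
    simp [sq]
  unfold sNorm
  split_ifs with hinf
  · rw [Fintype.iSup_comp_eq_of_map_univ_eq hmap Real.sqrt,
      Real.mul_iSup_of_nonneg (abs_nonneg c)]
    congr 1 with i
    rw [Real.sqrt_mul (sq_nonneg c), Real.sqrt_sq_eq_abs]
  · have hp0 : p.toReal ≠ 0 := ENNReal.toReal_ne_zero.mpr ⟨hp, hinf⟩
    rw [Fintype.sum_comp_eq_of_map_univ_eq hmap (· ^ (p.toReal / 2))]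
    have hterm : ∀ i, (c ^ 2 * hX.eigenvalues i) ^ (p.toReal / 2) =
        |c| ^ p.toReal * hX.eigenvalues i ^ (p.toReal / 2) := fun i => by
      rw [Real.mul_rpow (sq_nonneg c) (hXX.eigenvalues_nonneg i), ← sq_abs, ← Real.rpow_natCast,
        ← Real.rpow_mul (abs_nonneg c)]
      ring_nf
    simp only [hterm, ← Finset.mul_sum]
    rw [Real.mul_rpow (by positivity)
        (Finset.sum_nonneg fun i _ => Real.rpow_nonneg (hXX.eigenvalues_nonneg i) _),
      ← Real.rpow_mul (abs_nonneg c), mul_one_div_cancel hp0, Real.rpow_one]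

theorem Matrix.PosSemidef.sNorm_top_eq {B : Matrix n n ℂ} (hB : B.PosSemidef) :
    sNorm ∞ B = ⨆ i, hB.1.eigenvalues i := by
  rw [sNorm, if_pos rfl,
    Fintype.iSup_comp_eq_of_map_univ_eq hB.map_eigenvalues_conjTranspose_mul_self]
  congr 1 with i
  exact Real.sqrt_sq (hB.eigenvalues_nonneg i)

theorem Matrix.PosSemidef.sNorm_eq {B : Matrix n n ℂ} (hB : B.PosSemidef) {q : ℝ≥0∞}
    (hq : q ≠ ∞) : sNorm q B = (∑ i, hB.1.eigenvalues i ^ q.toReal) ^ (1 / q.toReal) := by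
  rw [sNorm, if_neg hq, Fintype.sum_comp_eq_of_map_univ_eq
    hB.map_eigenvalues_conjTranspose_mul_self (· ^ (q.toReal / 2))]
  congr 1
  refine Finset.sum_congr rfl fun i _ => ?_
  rw [← Real.rpow_natCast, ← Real.rpow_mul (hB.eigenvalues_nonneg i)]
  ring_nf

theorem Matrix.PosSemidef.sNorm_top_le_iff {B : Matrix n n ℂ} (hB : B.PosSemidef) {c : ℝ}
    (hc : 0 ≤ c) : sNorm ∞ B ≤ c ↔ ((c : ℂ) • 1 - B).PosSemidef := by
  rw [hB.1.posSemidef_smul_one_sub_iff, hB.sNorm_top_eq]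
  exact ⟨fun h i => (le_ciSup (Set.finite_range _).bddAbove i).trans h,
    fun h => Real.iSup_le h hc⟩

theorem Matrix.PosSemidef.posSemidef_sNorm_top_smul_one_sub {B : Matrix n n ℂ}
    (hB : B.PosSemidef) : ((sNorm ∞ B : ℂ) • 1 - B).PosSemidef :=
  (hB.sNorm_top_le_iff (sNorm_nonneg _ _)).mp le_rfl

end SchattenNorm

section MatrixPower

variable {d : ℕ}

theorem mpow_eq_cfc {A : Matrix (Fin d) (Fin d) ℂ} (hA : A.IsHermitian) (r : ℝ) :
    mpow A r = cfc (fun x : ℝ => x ^ r) A := by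
  rw [mpow, dif_pos hA, hA.cfc_eq, Matrix.IsHermitian.cfc, Unitary.conjStarAlgAut_apply]
  rfl

theorem isHermitian_mpow (A : Matrix (Fin d) (Fin d) ℂ) (r : ℝ) : (mpow A r).IsHermitian := by
  by_cases hA : A.IsHermitian
  · rw [mpow_eq_cfc hA]
    exact cfc_predicate _ A
  · rw [mpow, dif_neg hA]
    exact Matrix.isHermitian_zero

theorem mpow_one {A : Matrix (Fin d) (Fin d) ℂ} (hA : A.IsHermitian) : mpow A 1 = A := by
  rw [mpow_eq_cfc hA]
  simpa using cfc_id' ℝ A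

theorem mpow_zero {A : Matrix (Fin d) (Fin d) ℂ} (hA : A.IsHermitian) : mpow A 0 = 1 := by
  rw [mpow_eq_cfc hA]
  simpa using cfc_const_one ℝ A

theorem Matrix.PosDef.mpow_mul_mpow {A : Matrix (Fin d) (Fin d) ℂ} (hA : A.PosDef) (a b : ℝ) :
    mpow A a * mpow A b = mpow A (a + b) := by
  have hfin := Matrix.finite_real_spectrum (A := A)
  rw [mpow_eq_cfc hA.1, mpow_eq_cfc hA.1, mpow_eq_cfc hA.1,
    ← cfc_mul _ _ A (hfin.continuousOn _) (hfin.continuousOn _)]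
  exact cfc_congr fun x hx => (Real.rpow_add (hA.isStrictlyPositive.spectrum_pos hx) a b).symm

theorem Matrix.PosSemidef.mpow_mul_self {A : Matrix (Fin d) (Fin d) ℂ} (hA : A.PosSemidef)
    {r : ℝ} (hr : 0 ≤ r) : mpow A r * A = mpow A (r + 1) := by
  have hfin := Matrix.finite_real_spectrum (A := A)
  rw [mpow_eq_cfc hA.1, mpow_eq_cfc hA.1]
  nth_rw 2 [← cfc_id' ℝ A]
  rw [← cfc_mul _ _ A (hfin.continuousOn _) (hfin.continuousOn _)]
  exact cfc_congr fun x hx =>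
    (Real.rpow_add_one' (spectrum_nonneg_of_nonneg hA.nonneg hx) (by linarith)).symm

theorem posSemidef_mpow {A : Matrix (Fin d) (Fin d) ℂ} (hA : A.PosSemidef) (r : ℝ) :
    (mpow A r).PosSemidef := by
  rw [mpow_eq_cfc hA.1]
  exact (cfc_nonneg fun x hx =>
    Real.rpow_nonneg (spectrum_nonneg_of_nonneg hA.nonneg hx) r).posSemidef

theorem trace_mpow {A : Matrix (Fin d) (Fin d) ℂ} (hA : A.IsHermitian) (r : ℝ) :
    (mpow A r).trace = ∑ i, ((hA.eigenvalues i ^ r : ℝ) : ℂ) := by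
  rw [mpow, dif_pos hA, Matrix.trace_mul_cycle,
    Matrix.mem_unitaryGroup_iff'.mp hA.eigenvectorUnitary.2, Matrix.one_mul, Matrix.trace_diagonal]

end MatrixPower

section Monotonicity

variable {d : ℕ}

theorem Matrix.PosSemidef.re_trace_mpow_sub_one_mul_le {A B : Matrix (Fin d) (Fin d) ℂ}
    (hA : A.PosSemidef) (hB : B.PosSemidef) {p : ℝ} (hp : 1 ≤ p) :
    (mpow A (p - 1) * B).trace.re ≤
      (1 - 1 / p) * ∑ i, hA.1.eigenvalues i ^ p + 1 / p * ∑ j, hB.1.eigenvalues j ^ p := by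
  set a := hA.1.eigenvalues
  set b := hB.1.eigenvalues
  set U := (hA.1.eigenvectorUnitary : Matrix (Fin d) (Fin d) ℂ)
  set V := (hB.1.eigenvectorUnitary : Matrix (Fin d) (Fin d) ℂ)
  set w := fun i j => Complex.normSq ((star U * V) i j)
  have hW : star U * V ∈ Matrix.unitaryGroup (Fin d) ℂ :=
    Submonoid.mul_mem _ (Unitary.star_mem hA.1.eigenvectorUnitary.2) hB.1.eigenvectorUnitary.2
  have hBeq : B = V * Matrix.diagonal (fun j => (b j : ℂ)) * star V := by
    conv_lhs => rw [hB.1.spectral_theorem, Unitary.conjStarAlgAut_apply]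
    rfl
  have htrace : mpow A (p - 1) * B =
      (U * Matrix.diagonal (fun i => ((a i ^ (p - 1) : ℝ) : ℂ)) * star U) *
        (V * Matrix.diagonal (fun j => (b j : ℂ)) * star V) := by
    rw [mpow, dif_pos hA.1, ← hBeq]
  calc (mpow A (p - 1) * B).trace.re = ∑ i, ∑ j, a i ^ (p - 1) * b j * w i j := by
        rw [htrace, Matrix.trace_unitary_conj_diagonal_mul]
        simp only [← Complex.ofReal_sum, Complex.ofReal_re]
        rfl
    _ ≤ ∑ i, ∑ j, ((1 - 1 / p) * a i ^ p + 1 / p * b j ^ p) * w i j := by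
        gcongr with i _ j _
        · exact Complex.normSq_nonneg _
        · exact Real.rpow_sub_one_mul_le (hA.eigenvalues_nonneg i) (hB.eigenvalues_nonneg j) hp
    _ = (1 - 1 / p) * ∑ i, a i ^ p * ∑ j, w i j + 1 / p * ∑ j, b j ^ p * ∑ i, w i j := by
        simp only [add_mul, Finset.sum_add_distrib, Finset.mul_sum, mul_assoc]
        rw [Finset.sum_comm (f := fun i j => 1 / p * (b j ^ p * w i j))]
    _ = _ := by
        simp only [w, Matrix.sum_normSq_apply_of_mem_unitaryGroup hW,
          Matrix.sum_normSq_apply_of_mem_unitaryGroup' hW, mul_one]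

theorem Matrix.PosSemidef.sum_eigenvalues_rpow_le {A B : Matrix (Fin d) (Fin d) ℂ}
    (hA : A.PosSemidef) (hB : B.PosSemidef) (hAB : (B - A).PosSemidef) {p : ℝ} (hp : 1 ≤ p) :
    ∑ i, hA.1.eigenvalues i ^ p ≤ ∑ i, hB.1.eigenvalues i ^ p := by
  have hp0 : 0 < 1 / p := one_div_pos.2 (zero_lt_one.trans_le hp)
  have hself : ∑ i, hA.1.eigenvalues i ^ p = (mpow A (p - 1) * A).trace.re := by
    rw [hA.mpow_mul_self (sub_nonneg.2 hp), sub_add_cancel, trace_mpow hA.1,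
      ← Complex.ofReal_sum, Complex.ofReal_re]
  have hmono : (mpow A (p - 1) * A).trace.re ≤ (mpow A (p - 1) * B).trace.re := by
    have := (Complex.le_def.mp ((posSemidef_mpow hA (p - 1)).trace_mul_nonneg hAB)).1
    rwa [Matrix.mul_sub, Matrix.trace_sub, Complex.sub_re, Complex.zero_re, sub_nonneg] at this
  have hyoung := hmono.trans (hA.re_trace_mpow_sub_one_mul_le hB hp)
  rw [← hself] at hyoung
  exact le_of_mul_le_mul_left (by linarith) hp0

theorem sNorm_le_sNorm_of_posSemidef_sub {A B : Matrix (Fin d) (Fin d) ℂ} (hA : A.PosSemidef)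
    (hAB : (B - A).PosSemidef) {q : ℝ≥0∞} (hq : 1 ≤ q) : sNorm q A ≤ sNorm q B := by
  have hB : B.PosSemidef := by simpa using hA.add hAB
  by_cases hinf : q = ∞
  · subst hinf
    rw [hA.sNorm_top_le_iff (sNorm_nonneg _ _)]
    simpa using hB.posSemidef_sNorm_top_smul_one_sub.add hAB
  · have hp : 1 ≤ q.toReal := by simpa using ENNReal.toReal_mono hinf hq
    rw [hA.sNorm_eq hinf, hB.sNorm_eq hinf]
    exact Real.rpow_le_rpow
      (Finset.sum_nonneg fun i _ => Real.rpow_nonneg (hA.eigenvalues_nonneg i) _)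
      (hA.sum_eigenvalues_rpow_le hB hAB hp) (by positivity)

end Monotonicity

section HilbertMetric

variable {d : ℕ}

-- Hilbert's `M(A/B) = inf {λ | A ≤ λ B}` for positive definite `B`.
noncomputable def maxRatio (A B : Matrix (Fin d) (Fin d) ℂ) : ℝ :=
  sNorm ∞ (mpow B (-(1 / 2)) * A * mpow B (-(1 / 2)))

theorem dH_eq_log_maxRatio_add_log_maxRatio (A B : Matrix (Fin d) (Fin d) ℂ) :
    dH A B = Real.log (maxRatio B A) + Real.log (maxRatio A B) :=
  rfl

theorem posSemidef_maxRatio_smul_sub {A B : Matrix (Fin d) (Fin d) ℂ} (hA : A.PosSemidef)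
    (hB : B.PosDef) : ((maxRatio A B : ℂ) • B - A).PosSemidef := by
  set S := mpow B (-(1 / 2))
  set T := mpow B (1 / 2)
  have hS : Sᴴ = S := isHermitian_mpow B _
  have hT : Tᴴ = T := isHermitian_mpow B _
  have hTS : T * S = 1 := by rw [hB.mpow_mul_mpow, add_neg_cancel, mpow_zero hB.1]
  have hST : S * T = 1 := by rw [hB.mpow_mul_mpow, neg_add_cancel, mpow_zero hB.1]
  have hTT : T * T = B := by rw [hB.mpow_mul_mpow, add_halves, mpow_one hB.1]
  have hC : (S * A * S).PosSemidef := by simpa [hS] using hA.conjTranspose_mul_mul_same S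
  have h := hC.posSemidef_sNorm_top_smul_one_sub.mul_mul_conjTranspose_same T
  have hTCT : T * (S * A * S) * T = A := by
    rw [← Matrix.mul_assoc, ← Matrix.mul_assoc, hTS, Matrix.one_mul, Matrix.mul_assoc, hST,
      Matrix.mul_one]
  rwa [hT, Matrix.mul_sub, Matrix.sub_mul, Matrix.mul_smul, Matrix.smul_mul, Matrix.mul_one, hTT,
    hTCT] at h

theorem one_le_maxRatio_of_sNorm_eq {A B : Matrix (Fin d) (Fin d) ℂ} (hA : A.PosSemidef)
    (hB : B.PosDef) {q : ℝ≥0∞} (hq : 1 ≤ q) (hnorm : sNorm q A = sNorm q B)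
    (hne : sNorm q B ≠ 0) : 1 ≤ maxRatio A B := by
  have h := sNorm_le_sNorm_of_posSemidef_sub hA (posSemidef_maxRatio_smul_sub hA hB) hq
  have h0 : 0 ≤ maxRatio A B := sNorm_nonneg _ _
  rw [sNorm_smul _ (zero_lt_one.trans_le hq).ne', abs_of_nonneg h0, hnorm] at h
  exact (le_mul_iff_one_le_left ((sNorm_nonneg _ _).lt_of_ne' hne)).mp h

end HilbertMetric

/-- positive definite operators with equal nonzero Schatten-`q` norms are
comparable up to the factor `exp(d_H(ρ,σ))`. -/
theorem le_exp_hilbert_metric_smul_of_eq_schatten_norm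
    {d : ℕ} (ρ σ : Matrix (Fin d) (Fin d) ℂ) (hρ : ρ.PosDef) (hσ : σ.PosDef)
    (q : ℝ≥0∞) (hq : 1 ≤ q) (hnorm : sNorm q ρ = sNorm q σ) (hne : sNorm q ρ ≠ 0) :
    (((Real.exp (dH ρ σ) : ℝ) : ℂ) • σ - ρ).PosSemidef ∧
    (((Real.exp (dH ρ σ) : ℝ) : ℂ) • ρ - σ).PosSemidef := by
  have hρσ : 1 ≤ maxRatio ρ σ :=
    one_le_maxRatio_of_sNorm_eq hρ.posSemidef hσ hq hnorm (hnorm ▸ hne)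
  have hσρ : 1 ≤ maxRatio σ ρ :=
    one_le_maxRatio_of_sNorm_eq hσ.posSemidef hρ hq hnorm.symm hne
  have hexp : Real.exp (dH ρ σ) = maxRatio σ ρ * maxRatio ρ σ := by
    rw [dH_eq_log_maxRatio_add_log_maxRatio, Real.exp_add, Real.exp_log (by linarith),
      Real.exp_log (by linarith)]
  rw [hexp]
  exact ⟨(posSemidef_maxRatio_smul_sub hρ.posSemidef hσ).smul_sub_mono hσ.posSemidef
      (le_mul_of_one_le_left (by linarith) hσρ),
    (posSemidef_maxRatio_smul_sub hσ.posSemidef hρ).smul_sub_mono hρ.posSemidef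
      (le_mul_of_one_le_right (by linarith) hρσ)⟩

end
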